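/- Let μ be a permutation-invariant probability measure on ℝⁿ with respect to which all polynomials are integrable. Then for any two distinct top sets B₁ ≠ B₂ in [n] (possibly of different lengths), E_μ[χ_{B₁} · χ_{B₂}] = 0. -/
import Mathlib


open MvPolynomial MeasureTheory

/-- `B : Fin d → Fin n` is a top set if it is strictly increasing and there is a
sequence `A` of `d` distinct elements, disjoint from `B`, with `A i < B i` for all `i`. -/
def IsTopSet {n d : ℕ} (B : Fin d → Fin n) : Prop :=
  StrictMono B ∧ ∃ A : Fin d → Fin n,
    Function.Injective A ∧ (∀ i j, A i ≠ B j) ∧ ∀ i, A i < B i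

/-- `χ_{A,B} = ∏ i (x_{a_i} - x_{b_i})`. -/
noncomputable def chiAB {n d : ℕ} (A B : Fin d → Fin n) : MvPolynomial (Fin n) ℝ :=
  ∏ i, (X (A i) - X (B i))

open Classical in
/-- `χ_B = ∑_{A < B, A disjoint from B} χ_{A,B}`. -/
noncomputable def chiB {n d : ℕ} (B : Fin d → Fin n) : MvPolynomial (Fin n) ℝ :=
  ∑ A ∈ Finset.univ.filter (fun A : Fin d → Fin n =>
      Function.Injective A ∧ (∀ i j, A i ≠ B j) ∧ ∀ i, A i < B i),
    chiAB A B

/-- A permutation-invariant probability measure on `ℝⁿ`. -/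
def PermInvariant {n : ℕ} (μ : Measure (Fin n → ℝ)) : Prop :=
  ∀ π : Equiv.Perm (Fin n), Measure.map (fun x => x ∘ π) μ = μ

set_option linter.unusedVariables false

section Helpers
open Finset

variable {n d : ℕ}




open Classical in
noncomputable def Adm (B : Fin d → Fin n) : Finset (Fin d → Fin n) :=
  Finset.univ.filter (fun A : Fin d → Fin n =>
      Function.Injective A ∧ (∀ i j, A i ≠ B j) ∧ ∀ i, A i < B i)

lemma mem_Adm {B A : Fin d → Fin n} :
    A ∈ Adm B ↔ Function.Injective A ∧ (∀ i j, A i ≠ B j) ∧ ∀ i, A i < B i := by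
  simp [Adm]

noncomputable def Qx (x : Fin n → ℝ) (A B : Fin d → Fin n) : ℝ :=
  ∏ j, (x (A j) - x (B j))

open Classical in
noncomputable def Jlt (B : Fin d → Fin n) (k : Fin n) : Finset (Fin d) :=
  Finset.univ.filter (fun j => B j < k)

open Classical in
noncomputable def Je (B A : Fin d → Fin n) (k : Fin n) : Finset (Fin d) :=
  Finset.univ.filter (fun j => A j < k ∧ k < B j)

open Classical in
noncomputable def WW (B A : Fin d → Fin n) (k : Fin n) : Finset (Fin n) :=
  (Finset.Iio k).filter (fun i => (∀ j, B j ≠ i) ∧ (∀ j, A j ≠ i))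

open Classical in
/-- Partition of `Iio k` into: fresh indices, B-values, A-values. -/
lemma sum_Iio_split {B A : Fin d → Fin n} {k : Fin n} (hBinj : Function.Injective B)
    (hA : A ∈ Adm B) (f : Fin n → ℝ) :
    ∑ i ∈ Finset.Iio k, f i =
      (∑ i ∈ WW B A k, f i + ∑ j ∈ Jlt B k, f (B j)) +
        ∑ j ∈ Finset.univ.filter (fun j => A j < k), f (A j) := by
  classical
  obtain ⟨hAinj, hAB, hAlt⟩ := mem_Adm.1 hA
  have h1 : ∑ i ∈ (Finset.Iio k).filter (fun i => ∃ j, B j = i), f i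
      = ∑ j ∈ Jlt B k, f (B j) := by
    rw [show (Finset.Iio k).filter (fun i => ∃ j, B j = i) = (Jlt B k).image B by
      ext i
      simp only [mem_filter, Finset.mem_Iio, mem_image, Jlt, Finset.mem_univ, true_and]
      constructor
      · rintro ⟨hik, j, rfl⟩; exact ⟨j, hik, rfl⟩
      · rintro ⟨j, hj, rfl⟩; exact ⟨hj, j, rfl⟩]
    exact Finset.sum_image (fun a _ b _ h => hBinj h)
  have h2 : ∑ i ∈ ((Finset.Iio k).filter (fun i => ¬∃ j, B j = i)).filter
        (fun i => ∃ j, A j = i), f i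
      = ∑ j ∈ Finset.univ.filter (fun j => A j < k), f (A j) := by
    rw [show ((Finset.Iio k).filter (fun i => ¬∃ j, B j = i)).filter (fun i => ∃ j, A j = i)
        = (Finset.univ.filter (fun j => A j < k)).image A by
      ext i
      simp only [mem_filter, Finset.mem_Iio, mem_image, Finset.mem_univ, true_and]
      constructor
      · rintro ⟨⟨hik, _⟩, j, rfl⟩; exact ⟨j, hik, rfl⟩
      · rintro ⟨j, hj, rfl⟩; exact ⟨⟨hj, fun ⟨j', h⟩ => hAB j j' h.symm⟩, j, rfl⟩]
    exact Finset.sum_image (fun a _ b _ h => hAinj h)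
  have h3 : ∑ i ∈ Finset.Iio k, f i
      = ∑ i ∈ (Finset.Iio k).filter (fun i => ∃ j, B j = i), f i
        + (∑ i ∈ ((Finset.Iio k).filter (fun i => ¬∃ j, B j = i)).filter
            (fun i => ∃ j, A j = i), f i
          + ∑ i ∈ ((Finset.Iio k).filter (fun i => ¬∃ j, B j = i)).filter
            (fun i => ¬∃ j, A j = i), f i) := by
    rw [Finset.sum_filter_add_sum_filter_not, Finset.sum_filter_add_sum_filter_not]
  have h4 : ((Finset.Iio k).filter (fun i => ¬∃ j, B j = i)).filter (fun i => ¬∃ j, A j = i)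
      = WW B A k := by
    ext i
    simp only [mem_filter, WW, Finset.mem_Iio, not_exists]
    tauto
  rw [h3, h4, h1, h2]; ring



/-- fresh i, k not a value of A nor B -/
lemma termT1 {A B : Fin d → Fin n} (x : Fin n → ℝ) {i k : Fin n}
    (hiA : ∀ j, A j ≠ i) (hiB : ∀ j, B j ≠ i) (hkA : ∀ j, A j ≠ k) (hkB : ∀ j, B j ≠ k) :
    Qx (x ∘ (Equiv.swap i k)) A B = Qx x A B := by
  unfold Qx
  refine Finset.prod_congr rfl fun j _ => ?_
  simp only [Function.comp_apply,
    Equiv.swap_apply_of_ne_of_ne (hiA j) (hkA j),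
    Equiv.swap_apply_of_ne_of_ne (hiB j) (hkB j)]

/-- fresh i, A has value k at slot j₂, k not a value of B -/
lemma termT2 {A B : Fin d → Fin n} (x : Fin n → ℝ) {i k : Fin n} {j₂ : Fin d}
    (hj₂ : A j₂ = k) (hAinj : Function.Injective A)
    (hiA : ∀ j, A j ≠ i) (hiB : ∀ j, B j ≠ i) (hkB : ∀ j, B j ≠ k) :
    Qx (x ∘ (Equiv.swap i k)) A B = Qx x (Function.update A j₂ i) B := by
  unfold Qx
  refine Finset.prod_congr rfl fun j _ => ?_
  by_cases h : j = j₂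
  · subst h
    simp only [Function.comp_apply, hj₂, Equiv.swap_apply_right, Function.update_self,
      Equiv.swap_apply_of_ne_of_ne (hiB j) (hkB j)]
  · have hAk : A j ≠ k := fun hc => h (hAinj (hc.trans hj₂.symm))
    simp only [Function.comp_apply, Equiv.swap_apply_of_ne_of_ne (hiA j) hAk,
      Equiv.swap_apply_of_ne_of_ne (hiB j) (hkB j), Function.update_of_ne h]

/-- i = B j₀, k not a value of A nor B (case I) -/
lemma termT3 {A B : Fin d → Fin n} (x : Fin n → ℝ) {k : Fin n} {j₀ : Fin d}
    (hAB : ∀ i j, A i ≠ B j) (hBinj : Function.Injective B)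
    (hkA : ∀ j, A j ≠ k) (hkB : ∀ j, B j ≠ k) :
    Qx (x ∘ (Equiv.swap (B j₀) k)) A B
      = (x (A j₀) - x k) * ∏ j ∈ Finset.univ.erase j₀, (x (A j) - x (B j)) := by
  rw [Qx, ← Finset.mul_prod_erase Finset.univ _ (Finset.mem_univ j₀)]
  congr 1
  · simp only [Function.comp_apply, Equiv.swap_apply_left,
      Equiv.swap_apply_of_ne_of_ne (hAB j₀ j₀) (hkA j₀)]
  · refine Finset.prod_congr rfl fun j hj => ?_
    have hj' : j ≠ j₀ := (Finset.mem_erase.1 hj).1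
    have hBB : B j ≠ B j₀ := fun hc => hj' (hBinj hc)
    simp only [Function.comp_apply, Equiv.swap_apply_of_ne_of_ne (hAB j j₀) (hkA j),
      Equiv.swap_apply_of_ne_of_ne hBB (hkB j)]

/-- i = A j₀, k not a value of A nor B (case I): result as an update -/
lemma termT4 {A B : Fin d → Fin n} (x : Fin n → ℝ) {k : Fin n} {j₀ : Fin d}
    (hAinj : Function.Injective A) (hAB : ∀ i j, A i ≠ B j)
    (hkA : ∀ j, A j ≠ k) (hkB : ∀ j, B j ≠ k) :
    Qx (x ∘ (Equiv.swap (A j₀) k)) A B = Qx x (Function.update A j₀ k) B := by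
  unfold Qx
  refine Finset.prod_congr rfl fun j _ => ?_
  by_cases h : j = j₀
  · subst h
    have hB : B j ≠ A j := fun hc => hAB j j hc.symm
    simp only [Function.comp_apply, Equiv.swap_apply_left, Function.update_self,
      Equiv.swap_apply_of_ne_of_ne hB (hkB j)]
  · have hAA : A j ≠ A j₀ := fun hc => h (hAinj hc)
    have hBA : B j ≠ A j₀ := fun hc => (hAB j₀ j) hc.symm
    simp only [Function.comp_apply, Equiv.swap_apply_of_ne_of_ne hAA (hkA j),
      Equiv.swap_apply_of_ne_of_ne hBA (hkB j), Function.update_of_ne h]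

/-- expansion of `Qx` with an updated slot -/
lemma Qx_update {A B : Fin d → Fin n} (x : Fin n → ℝ) (j₀ : Fin d) (v : Fin n) :
    Qx x (Function.update A j₀ v) B
      = (x v - x (B j₀)) * ∏ j ∈ Finset.univ.erase j₀, (x (A j) - x (B j)) := by
  rw [Qx, ← Finset.mul_prod_erase Finset.univ _ (Finset.mem_univ j₀)]
  congr 1
  · rw [Function.update_self]
  · exact Finset.prod_congr rfl fun j hj =>
      by rw [Function.update_of_ne (Finset.mem_erase.1 hj).1]

lemma Qx_split1 {A B : Fin d → Fin n} (x : Fin n → ℝ) (j₀ : Fin d) :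
    Qx x A B = (x (A j₀) - x (B j₀)) * ∏ j ∈ Finset.univ.erase j₀, (x (A j) - x (B j)) :=
  (Finset.mul_prod_erase Finset.univ _ (Finset.mem_univ j₀)).symm

/-- the simple pairing identity (case I, k ∉ A) -/
lemma pairI {A B : Fin d → Fin n} (x : Fin n → ℝ) {k : Fin n} (j₀ : Fin d)
    (hAinj : Function.Injective A) (hAB : ∀ i j, A i ≠ B j) (hBinj : Function.Injective B)
    (hkA : ∀ j, A j ≠ k) (hkB : ∀ j, B j ≠ k) :
    Qx (x ∘ (Equiv.swap (B j₀) k)) A B + Qx (x ∘ (Equiv.swap (A j₀) k)) A B = Qx x A B := by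
  rw [termT3 x hAB hBinj hkA hkB, termT4 x hAinj hAB hkA hkB, Qx_update, Qx_split1 x j₀]
  ring



lemma Qx_split2 {A B : Fin d → Fin n} (x : Fin n → ℝ) {j₀ j₂ : Fin d} (h : j₂ ≠ j₀) :
    Qx x A B = (x (A j₀) - x (B j₀)) * ((x (A j₂) - x (B j₂)) *
      ∏ j ∈ (Finset.univ.erase j₀).erase j₂, (x (A j) - x (B j))) := by
  rw [Qx, ← Finset.mul_prod_erase Finset.univ _ (Finset.mem_univ j₀),
    ← Finset.mul_prod_erase (Finset.univ.erase j₀) _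
      (Finset.mem_erase.2 ⟨h, Finset.mem_univ _⟩)]


/-- i = B j₀ when A has value k at j₂ (case I) -/
lemma termT5 {A B : Fin d → Fin n} (x : Fin n → ℝ) {k : Fin n} {j₀ j₂ : Fin d}
    (hj₂ : A j₂ = k) (hne : j₀ ≠ j₂)
    (hAinj : Function.Injective A) (hAB : ∀ i j, A i ≠ B j) (hBinj : Function.Injective B)
    (hkB : ∀ j, B j ≠ k) :
    Qx (x ∘ (Equiv.swap (B j₀) k)) A B
      = (x (A j₀) - x k) * ((x (B j₀) - x (B j₂)) *
          ∏ j ∈ (Finset.univ.erase j₀).erase j₂, (x (A j) - x (B j))) := by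
  have e : Qx (x ∘ (Equiv.swap (B j₀) k)) A B
      = (x ((Equiv.swap (B j₀) k) (A j₀)) - x ((Equiv.swap (B j₀) k) (B j₀))) *
        ((x ((Equiv.swap (B j₀) k) (A j₂)) - x ((Equiv.swap (B j₀) k) (B j₂))) *
          ∏ j ∈ (Finset.univ.erase j₀).erase j₂,
            (x ((Equiv.swap (B j₀) k) (A j)) - x ((Equiv.swap (B j₀) k) (B j)))) :=
    Qx_split2 (fun a => x ((Equiv.swap (B j₀) k) a)) (Ne.symm hne)
  rw [e]
  have hAk : ∀ j, j ≠ j₂ → A j ≠ k := fun j hj hc => hj (hAinj (hc.trans hj₂.symm))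
  congr 1
  · rw [Equiv.swap_apply_left, Equiv.swap_apply_of_ne_of_ne (hAB j₀ j₀) (hAk j₀ hne)]
  congr 1
  · rw [hj₂, Equiv.swap_apply_right,
      Equiv.swap_apply_of_ne_of_ne (fun hc => hne (hBinj hc).symm) (hkB j₂)]
  · refine Finset.prod_congr rfl fun j hj => ?_
    obtain ⟨hj2, hj0⟩ := Finset.mem_erase.1 hj
    have hj0' : j ≠ j₀ := (Finset.mem_erase.1 hj0).1
    rw [Equiv.swap_apply_of_ne_of_ne (hAB j j₀) (hAk j hj2),
      Equiv.swap_apply_of_ne_of_ne (fun hc => hj0' (hBinj hc)) (hkB j)]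

/-- i = A j₀ when A has value k at j₂ (case I) -/
lemma termT6 {A B : Fin d → Fin n} (x : Fin n → ℝ) {k : Fin n} {j₀ j₂ : Fin d}
    (hj₂ : A j₂ = k) (hne : j₀ ≠ j₂)
    (hAinj : Function.Injective A) (hAB : ∀ i j, A i ≠ B j) (hBinj : Function.Injective B)
    (hkB : ∀ j, B j ≠ k) :
    Qx (x ∘ (Equiv.swap (A j₀) k)) A B
      = (x k - x (B j₀)) * ((x (A j₀) - x (B j₂)) *
          ∏ j ∈ (Finset.univ.erase j₀).erase j₂, (x (A j) - x (B j))) := by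
  have e : Qx (x ∘ (Equiv.swap (A j₀) k)) A B
      = (x ((Equiv.swap (A j₀) k) (A j₀)) - x ((Equiv.swap (A j₀) k) (B j₀))) *
        ((x ((Equiv.swap (A j₀) k) (A j₂)) - x ((Equiv.swap (A j₀) k) (B j₂))) *
          ∏ j ∈ (Finset.univ.erase j₀).erase j₂,
            (x ((Equiv.swap (A j₀) k) (A j)) - x ((Equiv.swap (A j₀) k) (B j)))) :=
    Qx_split2 (fun a => x ((Equiv.swap (A j₀) k) a)) (Ne.symm hne)
  rw [e]
  have hAk : ∀ j, j ≠ j₂ → A j ≠ k := fun j hj hc => hj (hAinj (hc.trans hj₂.symm))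
  have hBA : ∀ j j', B j ≠ A j' := fun j j' hc => hAB j' j hc.symm
  congr 1
  · rw [Equiv.swap_apply_left, Equiv.swap_apply_of_ne_of_ne (hBA j₀ j₀) (hkB j₀)]
  congr 1
  · rw [hj₂, Equiv.swap_apply_right, Equiv.swap_apply_of_ne_of_ne (hBA j₂ j₀) (hkB j₂)]
  · refine Finset.prod_congr rfl fun j hj => ?_
    obtain ⟨hj2, hj0⟩ := Finset.mem_erase.1 hj
    have hj0' : j ≠ j₀ := (Finset.mem_erase.1 hj0).1
    rw [Equiv.swap_apply_of_ne_of_ne (fun hc => hj0' (hAinj hc)) (hAk j hj2),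
      Equiv.swap_apply_of_ne_of_ne (hBA j j₀) (hkB j)]

/-- expansion of a double update -/
lemma Qx_update2 {A B : Fin d → Fin n} (x : Fin n → ℝ) {j₀ j₂ : Fin d} (hne : j₀ ≠ j₂)
    (u v : Fin n) :
    Qx x (Function.update (Function.update A j₀ u) j₂ v) B
      = (x u - x (B j₀)) * ((x v - x (B j₂)) *
          ∏ j ∈ (Finset.univ.erase j₀).erase j₂, (x (A j) - x (B j))) := by
  rw [Qx_split2 (A := Function.update (Function.update A j₀ u) j₂ v) (B := B) x (Ne.symm hne)]
  congr 2
  · rw [Function.update_of_ne hne, Function.update_self]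
  · rw [Function.update_self]
  · refine Finset.prod_congr rfl fun j hj => ?_
    obtain ⟨hj2, hj0⟩ := Finset.mem_erase.1 hj
    have hj0' : j ≠ j₀ := (Finset.mem_erase.1 hj0).1
    rw [Function.update_of_ne hj2, Function.update_of_ne hj0']

/-- the pairing identity when A contains k (case I) -/
lemma pairIk {A B : Fin d → Fin n} (x : Fin n → ℝ) {k : Fin n} {j₀ j₂ : Fin d}
    (hj₂ : A j₂ = k) (hne : j₀ ≠ j₂)
    (hAinj : Function.Injective A) (hAB : ∀ i j, A i ≠ B j) (hBinj : Function.Injective B)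
    (hkB : ∀ j, B j ≠ k) :
    Qx (x ∘ (Equiv.swap (B j₀) k)) A B + Qx (x ∘ (Equiv.swap (A j₀) k)) A B = Qx x A B := by
  rw [termT5 x hj₂ hne hAinj hAB hBinj hkB, termT6 x hj₂ hne hAinj hAB hBinj hkB,
    Qx_split2 (A := A) (B := B) x (Ne.symm hne), hj₂]
  ring

section caseII
variable {A B : Fin d → Fin n} {k : Fin n} {jk : Fin d}

/-- case II, fresh i -/
lemma termU1 (x : Fin n → ℝ) (hjk : B jk = k) (hBinj : Function.Injective B)
    (hAB : ∀ i j, A i ≠ B j) {i : Fin n} (hiA : ∀ j, A j ≠ i) (hiB : ∀ j, B j ≠ i) :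
    Qx (x ∘ (Equiv.swap i k)) A B
      = (x (A jk) - x i) * ∏ j ∈ Finset.univ.erase jk, (x (A j) - x (B j)) := by
  have hAk : ∀ j, A j ≠ k := fun j => hjk ▸ hAB j jk
  have e : Qx (x ∘ (Equiv.swap i k)) A B
      = (x ((Equiv.swap i k) (A jk)) - x ((Equiv.swap i k) (B jk))) *
          ∏ j ∈ Finset.univ.erase jk,
            (x ((Equiv.swap i k) (A j)) - x ((Equiv.swap i k) (B j))) :=
    Qx_split1 (fun a => x ((Equiv.swap i k) a)) jk
  rw [e]
  congr 1
  · rw [hjk, Equiv.swap_apply_right, Equiv.swap_apply_of_ne_of_ne (hiA jk) (hAk jk)]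
  · refine Finset.prod_congr rfl fun j hj => ?_
    have hj' : j ≠ jk := (Finset.mem_erase.1 hj).1
    have hBk : B j ≠ k := fun hc => hj' (hBinj (hc.trans hjk.symm))
    rw [Equiv.swap_apply_of_ne_of_ne (hiA j) (hAk j),
      Equiv.swap_apply_of_ne_of_ne (hiB j) hBk]

/-- case II, i = A jk -/
lemma termU2 (x : Fin n → ℝ) (hjk : B jk = k) (hBinj : Function.Injective B)
    (hAinj : Function.Injective A) (hAB : ∀ i j, A i ≠ B j) :
    Qx (x ∘ (Equiv.swap (A jk) k)) A B
      = (x k - x (A jk)) * ∏ j ∈ Finset.univ.erase jk, (x (A j) - x (B j)) := by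
  have hAk : ∀ j, A j ≠ k := fun j => hjk ▸ hAB j jk
  have e : Qx (x ∘ (Equiv.swap (A jk) k)) A B
      = (x ((Equiv.swap (A jk) k) (A jk)) - x ((Equiv.swap (A jk) k) (B jk))) *
          ∏ j ∈ Finset.univ.erase jk,
            (x ((Equiv.swap (A jk) k) (A j)) - x ((Equiv.swap (A jk) k) (B j))) :=
    Qx_split1 (fun a => x ((Equiv.swap (A jk) k) a)) jk
  rw [e]
  congr 1
  · rw [Equiv.swap_apply_left, hjk, Equiv.swap_apply_right]
  · refine Finset.prod_congr rfl fun j hj => ?_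
    have hj' : j ≠ jk := (Finset.mem_erase.1 hj).1
    have hBk : B j ≠ k := fun hc => hj' (hBinj (hc.trans hjk.symm))
    rw [Equiv.swap_apply_of_ne_of_ne (fun hc => hj' (hAinj hc)) (hAk j),
      Equiv.swap_apply_of_ne_of_ne (fun hc => hAB jk j hc.symm) hBk]

/-- case II, i = B j₀ -/
lemma termU3 (x : Fin n → ℝ) (hjk : B jk = k) (hBinj : Function.Injective B)
    (hAinj : Function.Injective A) (hAB : ∀ i j, A i ≠ B j) {j₀ : Fin d} (hne : j₀ ≠ jk) :
    Qx (x ∘ (Equiv.swap (B j₀) k)) A B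
      = (x (A j₀) - x k) * ((x (A jk) - x (B j₀)) *
          ∏ j ∈ (Finset.univ.erase j₀).erase jk, (x (A j) - x (B j))) := by
  have hAk : ∀ j, A j ≠ k := fun j => hjk ▸ hAB j jk
  have hBk : ∀ j, j ≠ jk → B j ≠ k := fun j hj hc => hj (hBinj (hc.trans hjk.symm))
  have e : Qx (x ∘ (Equiv.swap (B j₀) k)) A B
      = (x ((Equiv.swap (B j₀) k) (A j₀)) - x ((Equiv.swap (B j₀) k) (B j₀))) *
        ((x ((Equiv.swap (B j₀) k) (A jk)) - x ((Equiv.swap (B j₀) k) (B jk))) *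
          ∏ j ∈ (Finset.univ.erase j₀).erase jk,
            (x ((Equiv.swap (B j₀) k) (A j)) - x ((Equiv.swap (B j₀) k) (B j)))) :=
    Qx_split2 (fun a => x ((Equiv.swap (B j₀) k) a)) (Ne.symm hne)
  rw [e]
  congr 1
  · rw [Equiv.swap_apply_left, Equiv.swap_apply_of_ne_of_ne (hAB j₀ j₀) (hAk j₀)]
  congr 1
  · rw [hjk, Equiv.swap_apply_right, Equiv.swap_apply_of_ne_of_ne (hAB jk j₀) (hAk jk)]
  · refine Finset.prod_congr rfl fun j hj => ?_
    obtain ⟨hjk', hj0⟩ := Finset.mem_erase.1 hj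
    have hj0' : j ≠ j₀ := (Finset.mem_erase.1 hj0).1
    rw [Equiv.swap_apply_of_ne_of_ne (hAB j j₀) (hAk j),
      Equiv.swap_apply_of_ne_of_ne (fun hc => hj0' (hBinj hc)) (hBk j hjk')]

/-- case II, i = A j₀, j₀ ≠ jk -/
lemma termU4 (x : Fin n → ℝ) (hjk : B jk = k) (hBinj : Function.Injective B)
    (hAinj : Function.Injective A) (hAB : ∀ i j, A i ≠ B j) {j₀ : Fin d} (hne : j₀ ≠ jk) :
    Qx (x ∘ (Equiv.swap (A j₀) k)) A B
      = (x k - x (B j₀)) * ((x (A jk) - x (A j₀)) *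
          ∏ j ∈ (Finset.univ.erase j₀).erase jk, (x (A j) - x (B j))) := by
  have hAk : ∀ j, A j ≠ k := fun j => hjk ▸ hAB j jk
  have hBk : ∀ j, j ≠ jk → B j ≠ k := fun j hj hc => hj (hBinj (hc.trans hjk.symm))
  have hBA : ∀ j j', B j ≠ A j' := fun j j' hc => hAB j' j hc.symm
  have e : Qx (x ∘ (Equiv.swap (A j₀) k)) A B
      = (x ((Equiv.swap (A j₀) k) (A j₀)) - x ((Equiv.swap (A j₀) k) (B j₀))) *
        ((x ((Equiv.swap (A j₀) k) (A jk)) - x ((Equiv.swap (A j₀) k) (B jk))) *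
          ∏ j ∈ (Finset.univ.erase j₀).erase jk,
            (x ((Equiv.swap (A j₀) k) (A j)) - x ((Equiv.swap (A j₀) k) (B j)))) :=
    Qx_split2 (fun a => x ((Equiv.swap (A j₀) k) a)) (Ne.symm hne)
  rw [e]
  congr 1
  · rw [Equiv.swap_apply_left, Equiv.swap_apply_of_ne_of_ne (hBA j₀ j₀) (hBk j₀ hne)]
  congr 1
  · rw [hjk, Equiv.swap_apply_right,
      Equiv.swap_apply_of_ne_of_ne (fun hc => hne.symm (hAinj hc) |>.elim) (hAk jk)]
  · refine Finset.prod_congr rfl fun j hj => ?_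
    obtain ⟨hjk', hj0⟩ := Finset.mem_erase.1 hj
    have hj0' : j ≠ j₀ := (Finset.mem_erase.1 hj0).1
    rw [Equiv.swap_apply_of_ne_of_ne (fun hc => hj0' (hAinj hc)) (hAk j),
      Equiv.swap_apply_of_ne_of_ne (hBA j j₀) (hBk j hjk')]

/-- the pairing identity (case II) -/
lemma pairII (x : Fin n → ℝ) (hjk : B jk = k) (hBinj : Function.Injective B)
    (hAinj : Function.Injective A) (hAB : ∀ i j, A i ≠ B j) {j₀ : Fin d} (hne : j₀ ≠ jk) :
    Qx (x ∘ (Equiv.swap (B j₀) k)) A B + Qx (x ∘ (Equiv.swap (A j₀) k)) A B = Qx x A B := by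
  rw [termU3 x hjk hBinj hAinj hAB hne, termU4 x hjk hBinj hAinj hAB hne,
    Qx_split2 (A := A) (B := B) x (Ne.symm hne), hjk]
  ring
end caseII

lemma sigma_mk_eq {β : Type*} {b₁ b₂ : Fin d → Fin n} {i₁ i₂ : β} (h1 : b₁ = b₂)
    (h2 : i₁ = i₂) : (⟨b₁, i₁⟩ : Σ _ : Fin d → Fin n, β) = ⟨b₂, i₂⟩ := by
  subst h1; subst h2; rfl

lemma inj_update {A : Fin d → Fin n} (hA : Function.Injective A) {i : Fin n}
    (hi : ∀ j, A j ≠ i) (j₀ : Fin d) : Function.Injective (Function.update A j₀ i) := by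
  intro a b h
  by_cases ha : a = j₀ <;> by_cases hb : b = j₀
  · rw [ha, hb]
  · rw [ha, Function.update_self, Function.update_of_ne hb] at h
    exact absurd h.symm (hi b)
  · rw [hb, Function.update_self, Function.update_of_ne ha] at h
    exact absurd h (hi a)
  · rw [Function.update_of_ne ha, Function.update_of_ne hb] at h
    exact hA h

/-- Case II of the eigenvector identity. -/
lemma eigenII {B : Fin d → Fin n} (hBinj : Function.Injective B) {k : Fin n} {jk : Fin d}
    (hjk : B jk = k) (x : Fin n → ℝ) :
    ∑ i ∈ Finset.Iio k, ∑ A ∈ Adm B, Qx (x ∘ (Equiv.swap i k)) A B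
      = (((Jlt B k).card : ℝ) - 1) * ∑ A ∈ Adm B, Qx x A B := by
  classical
  rw [Finset.sum_comm]
  have key : ∀ A ∈ Adm B, ∑ i ∈ Finset.Iio k, Qx (x ∘ (Equiv.swap i k)) A B
      = ((∑ i ∈ WW B A k, Qx (x ∘ (Equiv.swap i k)) A B
          + ∑ j ∈ Je B A k, Qx (x ∘ (Equiv.swap (A j) k)) A B)
         + (((Jlt B k).card : ℝ) - 1) * Qx x A B) := by
    intro A hA
    obtain ⟨hAinj, hAB, hAlt⟩ := mem_Adm.1 hA
    rw [sum_Iio_split hBinj hA]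
    have hsplit : Finset.univ.filter (fun j => A j < k)
        = insert jk (Jlt B k ∪ Je B A k) := by
      ext j
      simp only [Finset.mem_filter, Finset.mem_univ, true_and, Finset.mem_insert,
        Finset.mem_union, Jlt, Je]
      constructor
      · intro hAj
        rcases lt_trichotomy (B j) k with h | h | h
        · exact Or.inr (Or.inl h)
        · exact Or.inl (hBinj (h.trans hjk.symm))
        · exact Or.inr (Or.inr ⟨hAj, h⟩)
      · rintro (rfl | hj | hj)
        · exact hjk ▸ hAlt _
        · exact (hAlt j).trans hj
        · exact hj.1
    have hjknotin : jk ∉ Jlt B k ∪ Je B A k := by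
      simp only [Finset.mem_union, Jlt, Je, Finset.mem_filter, Finset.mem_univ, true_and,
        hjk, not_or]
      exact ⟨lt_irrefl k, fun h => lt_irrefl k h.2⟩
    have hdisj : Disjoint (Jlt B k) (Je B A k) := by
      rw [Finset.disjoint_left]
      intro j hj1 hj2
      simp only [Jlt, Finset.mem_filter, Finset.mem_univ, true_and] at hj1
      simp only [Je, Finset.mem_filter, Finset.mem_univ, true_and] at hj2
      exact absurd (hj1.trans hj2.2) (lt_irrefl _)
    rw [hsplit, Finset.sum_insert hjknotin, Finset.sum_union hdisj]
    have h2 : Qx (x ∘ (Equiv.swap (A jk) k)) A B = - Qx x A B := by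
      rw [termU2 x hjk hBinj hAinj hAB, Qx_split1 (A := A) (B := B) x jk, hjk]
      ring
    have h1 : ∑ j ∈ Jlt B k, Qx (x ∘ (Equiv.swap (B j) k)) A B
        + ∑ j ∈ Jlt B k, Qx (x ∘ (Equiv.swap (A j) k)) A B
        = ((Jlt B k).card : ℝ) * Qx x A B := by
      rw [← Finset.sum_add_distrib]
      rw [Finset.sum_congr rfl (fun j hj => ?_), Finset.sum_const, nsmul_eq_mul]
      have hjlt : B j < k := by
        simpa only [Jlt, Finset.mem_filter, Finset.mem_univ, true_and] using hj
      exact pairII x hjk hBinj hAinj hAB (fun h => absurd (h ▸ hjlt) (hjk ▸ lt_irrefl k))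
    rw [h2]
    linarith [h1]
  rw [Finset.sum_congr rfl key, Finset.sum_add_distrib, Finset.sum_add_distrib, ← Finset.mul_sum]
  have Z1 : ∑ A ∈ Adm B, ∑ i ∈ WW B A k, Qx (x ∘ (Equiv.swap i k)) A B = 0 := by
    rw [Finset.sum_sigma']
    refine Finset.sum_involution
      (fun p hp => ⟨Function.update p.1 jk p.2, p.1 jk⟩) (fun p hp => ?_) (fun p hp _ => ?_)
      (fun p hp => ?_) (fun p hp => ?_)
    · -- sum of term and involution-image is 0
      obtain ⟨hpA, hpi⟩ := Finset.mem_sigma.1 hp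
      obtain ⟨hAinj, hAB, hAlt⟩ := mem_Adm.1 hpA
      have hmem := (Finset.mem_filter.1 hpi)
      obtain ⟨hiB, hiA⟩ := hmem.2
      have hik : p.2 < k := by simpa using hmem.1
      have e1 := termU1 (A := p.1) x hjk hBinj hAB hiA hiB
      set A' := Function.update p.1 jk p.2 with hA'
      have hiA' : ∀ j, A' j ≠ p.1 jk := by
        intro j
        rw [hA']
        by_cases h : j = jk
        · rw [h, Function.update_self]; exact fun hc => hiA jk hc.symm
        · rw [Function.update_of_ne h]; exact fun hc => h (hAinj hc)
      have hiB' : ∀ j, B j ≠ p.1 jk := fun j hc => hAB jk j hc.symm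
      have e2 := termU1 (A := A') x hjk hBinj
        (fun i j => by
          rw [hA']
          by_cases h : i = jk
          · rw [h, Function.update_self]; exact fun hc => hiB j hc.symm
          · rw [Function.update_of_ne h]; exact hAB i j) hiA' hiB'
      rw [e1, e2]
      have hprod : ∏ j ∈ Finset.univ.erase jk, (x (A' j) - x (B j))
          = ∏ j ∈ Finset.univ.erase jk, (x (p.1 j) - x (B j)) :=
        Finset.prod_congr rfl fun j hj => by
          rw [hA', Function.update_of_ne (Finset.mem_erase.1 hj).1]
      rw [hprod, hA', Function.update_self]
      ring
    · -- no fixed points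
      intro hc
      obtain ⟨hpA, hpi⟩ := Finset.mem_sigma.1 hp
      have hiA := (Finset.mem_filter.1 hpi).2.2
      have h2 : p.2 = p.1 jk := by
        have := congrArg (fun q => q.1 jk) hc
        simpa [Function.update_self] using this
      exact hiA jk h2.symm
    · -- membership
      obtain ⟨hpA, hpi⟩ := Finset.mem_sigma.1 hp
      obtain ⟨hAinj, hAB, hAlt⟩ := mem_Adm.1 hpA
      have hmem := Finset.mem_filter.1 hpi
      obtain ⟨hiB, hiA⟩ := hmem.2
      have hik : p.2 < k := by simpa using hmem.1
      refine Finset.mem_sigma.2 ⟨mem_Adm.2 ⟨inj_update hAinj hiA jk, ?_, ?_⟩, ?_⟩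
      · intro i j
        dsimp only
        by_cases h : i = jk
        · rw [h, Function.update_self]; exact fun hc => hiB j hc.symm
        · rw [Function.update_of_ne h]; exact hAB i j
      · intro j
        dsimp only
        by_cases h : j = jk
        · rw [h, Function.update_self, hjk]; exact hik
        · rw [Function.update_of_ne h]; exact hAlt j
      · refine Finset.mem_filter.2 ⟨by simpa using (hjk ▸ hAlt jk : p.1 jk < k), ?_, ?_⟩
        · exact fun j hc => hAB jk j hc.symm
        · intro j
          dsimp only
          by_cases h : j = jk
          · rw [h, Function.update_self]; exact fun hc => hiA jk hc.symm
          · rw [Function.update_of_ne h]; exact fun hc => h (hAinj hc)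
    · -- involutive
      obtain ⟨A, i⟩ := p
      obtain ⟨hpA, hpi⟩ := Finset.mem_sigma.1 hp
      dsimp only
      refine sigma_mk_eq ?_ (by rw [Function.update_self])
      funext j
      by_cases h : j = jk
      · rw [h, Function.update_self]
      · rw [Function.update_of_ne h, Function.update_of_ne h]
  have Z2 : ∑ A ∈ Adm B, ∑ j ∈ Je B A k, Qx (x ∘ (Equiv.swap (A j) k)) A B = 0 := by
    rw [Finset.sum_sigma']
    refine Finset.sum_involution
      (fun p hp => ⟨p.1 ∘ (Equiv.swap p.2 jk), p.2⟩) (fun p hp => ?_) (fun p hp _ => ?_)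
      (fun p hp => ?_) (fun p hp => ?_)
    · obtain ⟨A, j₀⟩ := p
      obtain ⟨hpA, hpj⟩ := Finset.mem_sigma.1 hp
      obtain ⟨hAinj, hAB, hAlt⟩ := mem_Adm.1 hpA
      have hj0 : A j₀ < k ∧ k < B j₀ := by
        simpa [Je] using hpj
      have hne : j₀ ≠ jk := fun hc => absurd (hc ▸ hj0.2) (hjk ▸ lt_irrefl k)
      dsimp only
      set A' : Fin d → Fin n := A ∘ (Equiv.swap j₀ jk) with hA'
      have hA'inj : Function.Injective A' := hAinj.comp (Equiv.injective _)
      have hA'B : ∀ i j, A' i ≠ B j := fun i j => hAB _ j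
      have hA'j₀ : A' j₀ = A jk := by rw [hA', Function.comp_apply, Equiv.swap_apply_left]
      have hA'jk : A' jk = A j₀ := by rw [hA', Function.comp_apply, Equiv.swap_apply_right]
      rw [termU4 x hjk hBinj hAinj hAB hne,
        show Qx (x ∘ (Equiv.swap (A' j₀) k)) A' B
          = (x k - x (B j₀)) * ((x (A' jk) - x (A' j₀)) *
              ∏ j ∈ (Finset.univ.erase j₀).erase jk, (x (A' j) - x (B j))) from
          termU4 x hjk hBinj hA'inj hA'B hne,
        hA'j₀, hA'jk,
        show ∏ j ∈ (Finset.univ.erase j₀).erase jk, (x (A' j) - x (B j))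
          = ∏ j ∈ (Finset.univ.erase j₀).erase jk, (x (A j) - x (B j)) from
          Finset.prod_congr rfl fun j hj => by
            obtain ⟨hjjk, hjj0⟩ := Finset.mem_erase.1 hj
            rw [hA', Function.comp_apply,
              Equiv.swap_apply_of_ne_of_ne (Finset.mem_erase.1 hjj0).1 hjjk]]
      ring
    · obtain ⟨A, j₀⟩ := p
      obtain ⟨hpA, hpj⟩ := Finset.mem_sigma.1 hp
      obtain ⟨hAinj, hAB, hAlt⟩ := mem_Adm.1 hpA
      have hj0 : A j₀ < k ∧ k < B j₀ := by simpa [Je] using hpj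
      have hne : j₀ ≠ jk := fun hc => absurd (hc ▸ hj0.2) (hjk ▸ lt_irrefl k)
      intro hc
      have h2 : A (Equiv.swap j₀ jk jk) = A jk := congrFun (congrArg (fun q => q.1) hc) jk
      rw [Equiv.swap_apply_right] at h2
      exact hne (hAinj h2)
    · obtain ⟨A, j₀⟩ := p
      obtain ⟨hpA, hpj⟩ := Finset.mem_sigma.1 hp
      obtain ⟨hAinj, hAB, hAlt⟩ := mem_Adm.1 hpA
      have hj0 : A j₀ < k ∧ k < B j₀ := by simpa [Je] using hpj
      have hne : j₀ ≠ jk := fun hc => absurd (hc ▸ hj0.2) (hjk ▸ lt_irrefl k)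
      have hAjk : A jk < k := hjk ▸ hAlt jk
      dsimp only
      refine Finset.mem_sigma.2 ⟨mem_Adm.2 ⟨hAinj.comp (Equiv.injective _),
        fun i j => hAB _ j, ?_⟩, ?_⟩
      · intro j
        show A ((Equiv.swap j₀ jk) j) < B j
        by_cases h : j = j₀
        · rw [h, Equiv.swap_apply_left]; exact hAjk.trans hj0.2
        · by_cases h' : j = jk
          · rw [h', Equiv.swap_apply_right, hjk]; exact hj0.1
          · rw [Equiv.swap_apply_of_ne_of_ne h h']; exact hAlt j
      · simp only [Je, Finset.mem_filter, Finset.mem_univ, true_and, Function.comp_apply,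
          Equiv.swap_apply_left]
        exact ⟨hAjk, hj0.2⟩
    · obtain ⟨A, j₀⟩ := p
      dsimp only
      refine sigma_mk_eq ?_ rfl
      funext j
      rw [Function.comp_apply, Function.comp_apply, Equiv.swap_apply_self]
  rw [Z1, Z2]
  ring

lemma sig_eq {τ β : Type*} {q₁ q₂ : τ} {b₁ b₂ : β} (h1 : q₁ = q₂) (h2 : b₁ = b₂) :
    (⟨q₁, b₁⟩ : Σ _ : τ, β) = ⟨q₂, b₂⟩ := by subst h1; subst h2; rfl

open Classical in
noncomputable def Pk (B : Fin d → Fin n) (k : Fin n) : Finset ((Fin d → Fin n) × Fin d) :=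
  ((Adm B) ×ˢ (Finset.univ : Finset (Fin d))).filter (fun q => q.1 q.2 = k)

open Classical in
noncomputable def De (B : Fin d → Fin n) (k : Fin n) : Finset ((Fin d → Fin n) × Fin d) :=
  ((Adm B) ×ˢ (Finset.univ : Finset (Fin d))).filter
    (fun q => (∀ j, q.1 j ≠ k) ∧ q.1 q.2 < k ∧ k < B q.2)

lemma mem_Pk {B : Fin d → Fin n} {k : Fin n} {q : (Fin d → Fin n) × Fin d} :
    q ∈ Pk B k ↔ q.1 ∈ Adm B ∧ q.1 q.2 = k := by
  simp [Pk]

lemma mem_De {B : Fin d → Fin n} {k : Fin n} {q : (Fin d → Fin n) × Fin d} :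
    q ∈ De B k ↔ q.1 ∈ Adm B ∧ (∀ j, q.1 j ≠ k) ∧ q.1 q.2 < k ∧ k < B q.2 := by
  simp only [De, Finset.mem_filter, Finset.mem_product, Finset.mem_univ, and_true]

lemma Pk_sig {β : Type*} {B : Fin d → Fin n} {k : Fin n} (T : (Fin d → Fin n) → Finset β)
    (f : (Fin d → Fin n) → β → ℝ) :
    ∑ t ∈ (Pk B k).sigma (fun q => T q.1), f t.1.1 t.2
      = ∑ A ∈ (Adm B).filter (fun A => ∃ j, A j = k), ∑ b ∈ T A, f A b := by
  classical
  rw [Finset.sum_sigma']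
  refine Finset.sum_bij (fun t _ => (⟨t.1.1, t.2⟩ : Σ _ : Fin d → Fin n, β)) ?_ ?_ ?_
    (fun _ _ => rfl)
  · rintro ⟨⟨A, j₂⟩, b⟩ ht
    obtain ⟨hq, hb⟩ := Finset.mem_sigma.1 ht
    obtain ⟨hA, hk⟩ := mem_Pk.1 hq
    exact Finset.mem_sigma.2 ⟨Finset.mem_filter.2 ⟨hA, j₂, hk⟩, hb⟩
  · rintro ⟨⟨A, j₂⟩, b⟩ ht ⟨⟨A', j₂'⟩, b'⟩ ht' hEq
    obtain ⟨hq, hb⟩ := Finset.mem_sigma.1 ht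
    obtain ⟨hA, hk⟩ := mem_Pk.1 hq
    obtain ⟨hq', hb'⟩ := Finset.mem_sigma.1 ht'
    obtain ⟨hA', hk'⟩ := mem_Pk.1 hq'
    have h1 : A = A' := congrArg (fun s => s.1) hEq
    have h2 : b = b' := congrArg (fun s => s.2) hEq
    subst h1
    have h3 : j₂ = j₂' := (mem_Adm.1 hA).1 (hk.trans hk'.symm)
    exact sig_eq (by rw [h3]) h2
  · rintro ⟨A, b⟩ ht
    obtain ⟨hA, hb⟩ := Finset.mem_sigma.1 ht
    obtain ⟨hA', j₂, hj₂⟩ := Finset.mem_filter.1 hA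
    exact ⟨⟨⟨A, j₂⟩, b⟩, Finset.mem_sigma.2 ⟨mem_Pk.2 ⟨hA', hj₂⟩, hb⟩, rfl⟩

lemma De_sum {B : Fin d → Fin n} {k : Fin n} (f : (Fin d → Fin n) → Fin d → ℝ) :
    ∑ q ∈ De B k, f q.1 q.2
      = ∑ A ∈ (Adm B).filter (fun A => ¬∃ j, A j = k), ∑ j ∈ Je B A k, f A j := by
  classical
  rw [Finset.sum_sigma']
  refine (Finset.sum_bij (fun t _ => (t.1, t.2)) ?_ ?_ ?_ (fun _ _ => rfl)).symm
  · rintro ⟨A, j⟩ ht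
    obtain ⟨hA, hj⟩ := Finset.mem_sigma.1 ht
    obtain ⟨hA', hknA⟩ := Finset.mem_filter.1 hA
    push_neg at hknA
    have hj' : A j < k ∧ k < B j := by simpa [Je] using hj
    exact mem_De.2 ⟨hA', hknA, hj'⟩
  · rintro ⟨A, j⟩ _ ⟨A', j'⟩ _ hEq
    exact sig_eq (congrArg Prod.fst hEq) (congrArg Prod.snd hEq)
  · rintro ⟨A, j⟩ hq
    obtain ⟨hA, hknA, hlt, hgt⟩ := mem_De.1 hq
    exact ⟨⟨A, j⟩, Finset.mem_sigma.2 ⟨Finset.mem_filter.2 ⟨hA, not_exists.2 hknA⟩,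
      by simp [Je, hlt, hgt]⟩, rfl⟩

/-- the central transfer bijection of case I -/
lemma transfer {B : Fin d → Fin n} {k : Fin n} (hkB : ∀ j, B j ≠ k)
    (F : (Fin d → Fin n) × Fin d → ℝ) :
    ∑ t ∈ (Pk B k).sigma (fun q => WW B q.1 k),
        F (Function.update t.1.1 t.1.2 t.2, t.1.2)
      = ∑ q ∈ De B k, F q := by
  classical
  refine Finset.sum_bij (fun t _ => (Function.update t.1.1 t.1.2 t.2, t.1.2)) ?_ ?_ ?_
    (fun _ _ => rfl)
  · rintro ⟨⟨A, j₂⟩, i⟩ ht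
    obtain ⟨hq, hi⟩ := Finset.mem_sigma.1 ht
    obtain ⟨hA, hk⟩ := mem_Pk.1 hq
    obtain ⟨hAinj, hAB, hAlt⟩ := mem_Adm.1 hA
    have hmem := Finset.mem_filter.1 hi
    obtain ⟨hiB, hiA⟩ := hmem.2
    have hik : i < k := by simpa using hmem.1
    refine mem_De.2 ⟨mem_Adm.2 ⟨inj_update hAinj hiA j₂, ?_, ?_⟩, ?_, ?_, ?_⟩
    · intro a b
      dsimp only
      by_cases h : a = j₂
      · rw [h, Function.update_self]; exact fun hc => hiB b hc.symm
      · rw [Function.update_of_ne h]; exact hAB a b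
    · intro j
      dsimp only
      by_cases h : j = j₂
      · rw [h, Function.update_self]; exact hik.trans (hk ▸ hAlt j₂)
      · rw [Function.update_of_ne h]; exact hAlt j
    · intro j
      dsimp only
      by_cases h : j = j₂
      · rw [h, Function.update_self]; exact Fin.ne_of_lt hik
      · rw [Function.update_of_ne h]
        exact fun hc => h (hAinj (hc.trans hk.symm))
    · show Function.update A j₂ i j₂ < k
      rw [Function.update_self]; exact hik
    · exact hk ▸ hAlt j₂
  · rintro ⟨⟨A, j₂⟩, i⟩ ht ⟨⟨A', j₂'⟩, i'⟩ ht' hEq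
    obtain ⟨hq, hi⟩ := Finset.mem_sigma.1 ht
    obtain ⟨hA, hk⟩ := mem_Pk.1 hq
    obtain ⟨hq', hi'⟩ := Finset.mem_sigma.1 ht'
    obtain ⟨hA', hk'⟩ := mem_Pk.1 hq'
    have h2 : j₂ = j₂' := congrArg Prod.snd hEq
    subst h2
    have h1 : Function.update A j₂ i = Function.update A' j₂ i' :=
      congrArg Prod.fst hEq
    have h3 : i = i' := by
      have := congrFun h1 j₂
      rwa [Function.update_self, Function.update_self] at this
    subst h3
    refine sig_eq ?_ rfl
    have hk2 : A j₂ = k := hk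
    have hk2' : A' j₂ = k := hk'
    have h4 : A = A' := by
      funext j
      by_cases h : j = j₂
      · rw [h, hk2, hk2']
      · have := congrFun h1 j
        rwa [Function.update_of_ne h, Function.update_of_ne h] at this
    rw [h4]
  · rintro ⟨A', j⟩ hq
    obtain ⟨hA', hknA, hlt, hgt⟩ := mem_De.1 hq
    obtain ⟨hAinj, hAB, hAlt⟩ := mem_Adm.1 hA'
    refine ⟨⟨⟨Function.update A' j k, j⟩, A' j⟩, ?_, ?_⟩
    · refine Finset.mem_sigma.2 ⟨mem_Pk.2 ⟨mem_Adm.2 ⟨inj_update hAinj hknA j, ?_, ?_⟩,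
        Function.update_self j k A'⟩, ?_⟩
      · intro a b
        dsimp only
        by_cases h : a = j
        · rw [h, Function.update_self]; exact fun hc => hkB b hc.symm
        · rw [Function.update_of_ne h]; exact hAB a b
      · intro a
        dsimp only
        by_cases h : a = j
        · rw [h, Function.update_self]; exact hgt
        · rw [Function.update_of_ne h]; exact hAlt a
      · refine Finset.mem_filter.2 ⟨by simpa using hlt, fun a hc => hAB j a hc.symm, ?_⟩
        intro a
        dsimp only
        by_cases h : a = j
        · rw [h, Function.update_self]; exact fun hc => absurd (hc ▸ hlt) (lt_irrefl k)
        · rw [Function.update_of_ne h]; exact fun hc => h (hAinj hc)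
    · have : Function.update (Function.update A' j k) j (A' j) = A' := by
        funext a
        by_cases h : a = j
        · rw [h, Function.update_self]
        · rw [Function.update_of_ne h, Function.update_of_ne h]
      dsimp only
      rw [this]

/-- composition form of termT6 -/
lemma termT6' {A B : Fin d → Fin n} (x : Fin n → ℝ) {k : Fin n} {j₀ j₂ : Fin d}
    (hj₂ : A j₂ = k) (hne : j₀ ≠ j₂)
    (hAinj : Function.Injective A) (hAB : ∀ i j, A i ≠ B j) (hBinj : Function.Injective B)
    (hkB : ∀ j, B j ≠ k) :
    Qx (x ∘ (Equiv.swap (A j₀) k)) A B = Qx x (A ∘ (Equiv.swap j₀ j₂)) B := by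
  have e : Qx x (A ∘ (Equiv.swap j₀ j₂)) B
      = (x (A ((Equiv.swap j₀ j₂) j₀)) - x (B j₀)) *
        ((x (A ((Equiv.swap j₀ j₂) j₂)) - x (B j₂)) *
          ∏ j ∈ (Finset.univ.erase j₀).erase j₂, (x (A ((Equiv.swap j₀ j₂) j)) - x (B j))) :=
    Qx_split2 x (Ne.symm hne)
  rw [termT6 x hj₂ hne hAinj hAB hBinj hkB, e, Equiv.swap_apply_left, Equiv.swap_apply_right,
    hj₂, show (∏ j ∈ (Finset.univ.erase j₀).erase j₂, (x (A ((Equiv.swap j₀ j₂) j)) - x (B j)))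
      = ∏ j ∈ (Finset.univ.erase j₀).erase j₂, (x (A j) - x (B j)) from
      Finset.prod_congr rfl fun j hj => by
        obtain ⟨hj2, hj0⟩ := Finset.mem_erase.1 hj
        rw [Equiv.swap_apply_of_ne_of_ne (Finset.mem_erase.1 hj0).1 hj2]]

/-- counting identity, case I -/
lemma countI {B : Fin d → Fin n} (hBinj : Function.Injective B) {k : Fin n}
    (hkB : ∀ j, B j ≠ k) {A : Fin d → Fin n} (hA : A ∈ Adm B) :
    ((WW B A k).card : ℝ) + (Je B A k).card + 2 * (Jlt B k).card
      = ((Finset.Iio k).card : ℝ) := by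
  classical
  obtain ⟨hAinj, hAB, hAlt⟩ := mem_Adm.1 hA
  have h := sum_Iio_split (k := k) hBinj hA (fun _ => (1 : ℝ))
  simp only [Finset.sum_const, nsmul_eq_mul, mul_one] at h
  have hsplit : Finset.univ.filter (fun j => A j < k) = Jlt B k ∪ Je B A k := by
    ext j
    simp only [Finset.mem_filter, Finset.mem_univ, true_and, Finset.mem_union, Jlt, Je]
    constructor
    · intro hAj
      rcases lt_trichotomy (B j) k with h' | h' | h'
      · exact Or.inl h'
      · exact absurd h' (hkB j)
      · exact Or.inr ⟨hAj, h'⟩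
    · rintro (hj | hj)
      · exact (hAlt j).trans hj
      · exact hj.1
  have hdisj : Disjoint (Jlt B k) (Je B A k) := by
    rw [Finset.disjoint_left]
    intro j hj1 hj2
    simp only [Jlt, Finset.mem_filter, Finset.mem_univ, true_and] at hj1
    simp only [Je, Finset.mem_filter, Finset.mem_univ, true_and] at hj2
    exact absurd (hj1.trans hj2.2) (lt_irrefl _)
  have h2 : (Finset.univ.filter (fun j => A j < k)).card
      = (Jlt B k).card + (Je B A k).card := by
    rw [hsplit, Finset.card_union_of_disjoint hdisj]
  rw [h2] at h
  push_cast at h ⊢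
  linarith

/-- Case I of the eigenvector identity. -/
lemma eigenI {B : Fin d → Fin n} (hBinj : Function.Injective B) {k : Fin n}
    (hkB : ∀ j, B j ≠ k) (x : Fin n → ℝ) :
    ∑ i ∈ Finset.Iio k, ∑ A ∈ Adm B, Qx (x ∘ (Equiv.swap i k)) A B
      = (((Finset.Iio k).card : ℝ) - (Jlt B k).card) * ∑ A ∈ Adm B, Qx x A B := by
  classical
  rw [Finset.sum_comm]
  have key : ∀ A ∈ Adm B, ∑ i ∈ Finset.Iio k, Qx (x ∘ (Equiv.swap i k)) A B
      = ((∑ i ∈ WW B A k, Qx (x ∘ (Equiv.swap i k)) A B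
          + ∑ j ∈ Je B A k, Qx (x ∘ (Equiv.swap (A j) k)) A B)
         + ((Jlt B k).card : ℝ) * Qx x A B) := by
    intro A hA
    obtain ⟨hAinj, hAB, hAlt⟩ := mem_Adm.1 hA
    rw [sum_Iio_split hBinj hA]
    have hsplit : Finset.univ.filter (fun j => A j < k) = Jlt B k ∪ Je B A k := by
      ext j
      simp only [Finset.mem_filter, Finset.mem_univ, true_and, Finset.mem_union, Jlt, Je]
      constructor
      · intro hAj
        rcases lt_trichotomy (B j) k with h' | h' | h'
        · exact Or.inl h'
        · exact absurd h' (hkB j)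
        · exact Or.inr ⟨hAj, h'⟩
      · rintro (hj | hj)
        · exact (hAlt j).trans hj
        · exact hj.1
    have hdisj : Disjoint (Jlt B k) (Je B A k) := by
      rw [Finset.disjoint_left]
      intro j hj1 hj2
      simp only [Jlt, Finset.mem_filter, Finset.mem_univ, true_and] at hj1
      simp only [Je, Finset.mem_filter, Finset.mem_univ, true_and] at hj2
      exact absurd (hj1.trans hj2.2) (lt_irrefl _)
    rw [hsplit, Finset.sum_union hdisj]
    have hpair : ∑ j ∈ Jlt B k, Qx (x ∘ (Equiv.swap (B j) k)) A B
        + ∑ j ∈ Jlt B k, Qx (x ∘ (Equiv.swap (A j) k)) A B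
        = ((Jlt B k).card : ℝ) * Qx x A B := by
      rw [← Finset.sum_add_distrib,
        Finset.sum_congr rfl (fun j hj => ?_), Finset.sum_const, nsmul_eq_mul]
      have hjlt : B j < k := by
        simpa only [Jlt, Finset.mem_filter, Finset.mem_univ, true_and] using hj
      by_cases hkA : ∃ j₂, A j₂ = k
      · obtain ⟨j₂, hj₂⟩ := hkA
        have hne : j ≠ j₂ := by
          intro hc
          rw [← hc] at hj₂
          exact absurd (hj₂ ▸ ((hAlt j).trans hjlt)) (lt_irrefl _)
        exact pairIk x hj₂ hne hAinj hAB hBinj hkB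
      · push_neg at hkA
        exact pairI x j hAinj hAB hBinj hkA hkB
    linarith [hpair]
  rw [Finset.sum_congr rfl key, Finset.sum_add_distrib, Finset.sum_add_distrib, ← Finset.mul_sum]
  have TWsplit := Finset.sum_filter_add_sum_filter_not (Adm B) (fun A => ∃ j, A j = k)
    (fun A => ∑ i ∈ WW B A k, Qx (x ∘ (Equiv.swap i k)) A B)
  have TEsplit := Finset.sum_filter_add_sum_filter_not (Adm B) (fun A => ∃ j, A j = k)
    (fun A => ∑ j ∈ Je B A k, Qx (x ∘ (Equiv.swap (A j) k)) A B)
  -- k-free part of TW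
  have TW0 : ∑ A ∈ (Adm B).filter (fun A => ¬∃ j, A j = k),
        ∑ i ∈ WW B A k, Qx (x ∘ (Equiv.swap i k)) A B
      = ∑ A ∈ (Adm B).filter (fun A => ¬∃ j, A j = k), ((WW B A k).card : ℝ) * Qx x A B := by
    refine Finset.sum_congr rfl fun A hA => ?_
    obtain ⟨hA', hknA⟩ := Finset.mem_filter.1 hA
    push_neg at hknA
    obtain ⟨hAinj, hAB, hAlt⟩ := mem_Adm.1 hA'
    rw [Finset.sum_congr rfl (fun i hi => ?_), Finset.sum_const, nsmul_eq_mul]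
    have hmem := Finset.mem_filter.1 hi
    exact termT1 x hmem.2.2 hmem.2.1 hknA hkB
  -- part of TW over A containing k: transfer to k-free A's
  have TWk : ∑ A ∈ (Adm B).filter (fun A => ∃ j, A j = k),
        ∑ i ∈ WW B A k, Qx (x ∘ (Equiv.swap i k)) A B
      = ∑ A ∈ (Adm B).filter (fun A => ¬∃ j, A j = k), ((Je B A k).card : ℝ) * Qx x A B := by
    rw [← Pk_sig (fun A => WW B A k) (fun A i => Qx (x ∘ (Equiv.swap i k)) A B)]
    rw [Finset.sum_congr rfl (fun t ht => ?_), transfer hkB (fun q => Qx x q.1 B),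
      De_sum (fun A _ => Qx x A B)]
    · refine Finset.sum_congr rfl fun A hA => ?_
      rw [Finset.sum_const, nsmul_eq_mul]
    · obtain ⟨hq, hi⟩ := Finset.mem_sigma.1 ht
      obtain ⟨hA, hk⟩ := mem_Pk.1 hq
      obtain ⟨hAinj, hAB, hAlt⟩ := mem_Adm.1 hA
      have hmem := Finset.mem_filter.1 hi
      exact termT2 x hk hAinj hmem.2.2 hmem.2.1 hkB
  -- k-free part of TE: transfer to A's containing k
  have TE0 : ∑ A ∈ (Adm B).filter (fun A => ¬∃ j, A j = k),
        ∑ j ∈ Je B A k, Qx (x ∘ (Equiv.swap (A j) k)) A B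
      = ∑ A ∈ (Adm B).filter (fun A => ∃ j, A j = k), ((WW B A k).card : ℝ) * Qx x A B := by
    have step1 : ∑ A ∈ (Adm B).filter (fun A => ¬∃ j, A j = k),
          ∑ j ∈ Je B A k, Qx (x ∘ (Equiv.swap (A j) k)) A B
        = ∑ A ∈ (Adm B).filter (fun A => ¬∃ j, A j = k),
            ∑ j ∈ Je B A k, Qx x (Function.update A j k) B := by
      refine Finset.sum_congr rfl fun A hA => Finset.sum_congr rfl fun j hj => ?_
      obtain ⟨hA', hknA⟩ := Finset.mem_filter.1 hA
      push_neg at hknA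
      obtain ⟨hAinj, hAB, hAlt⟩ := mem_Adm.1 hA'
      exact termT4 x hAinj hAB hknA hkB
    rw [step1, ← De_sum (fun A j => Qx x (Function.update A j k) B),
      ← transfer hkB (fun q => Qx x (Function.update q.1 q.2 k) B)]
    have step2 : ∀ t ∈ (Pk B k).sigma (fun q => WW B q.1 k),
        Qx x (Function.update (Function.update t.1.1 t.1.2 t.2) t.1.2 k) B
          = Qx x t.1.1 B := by
      rintro ⟨⟨A, j₂⟩, i⟩ ht
      obtain ⟨hq, hi⟩ := Finset.mem_sigma.1 ht
      have hk2 : A j₂ = k := (mem_Pk.1 hq).2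
      have : Function.update (Function.update A j₂ i) j₂ k = A := by
        funext a
        by_cases h : a = j₂
        · rw [h, Function.update_self, hk2]
        · rw [Function.update_of_ne h, Function.update_of_ne h]
      rw [this]
    rw [Finset.sum_congr rfl step2, Pk_sig (fun A => WW B A k) (fun A _ => Qx x A B)]
    exact Finset.sum_congr rfl fun A hA => by rw [Finset.sum_const, nsmul_eq_mul]
  -- part of TE over A containing k: internal bijection
  have TEk : ∑ A ∈ (Adm B).filter (fun A => ∃ j, A j = k),
        ∑ j ∈ Je B A k, Qx (x ∘ (Equiv.swap (A j) k)) A B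
      = ∑ A ∈ (Adm B).filter (fun A => ∃ j, A j = k), ((Je B A k).card : ℝ) * Qx x A B := by
    have hR : ∑ A ∈ (Adm B).filter (fun A => ∃ j, A j = k), ((Je B A k).card : ℝ) * Qx x A B
        = ∑ t ∈ (Pk B k).sigma (fun q => Je B q.1 k), Qx x t.1.1 B := by
      rw [Pk_sig (fun A => Je B A k) (fun A _ => Qx x A B)]
      exact Finset.sum_congr rfl fun A _ => by rw [Finset.sum_const, nsmul_eq_mul]
    rw [← Pk_sig (fun A => Je B A k) (fun A j => Qx (x ∘ (Equiv.swap (A j) k)) A B), hR]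
    have hne' : ∀ t ∈ (Pk B k).sigma (fun q => Je B q.1 k), t.2 ≠ t.1.2 := by
      rintro ⟨⟨A, j₂⟩, j⟩ ht
      obtain ⟨hq, hj⟩ := Finset.mem_sigma.1 ht
      have hk2 : A j₂ = k := (mem_Pk.1 hq).2
      have hj' : A j < k ∧ k < B j := by simpa [Je] using hj
      intro hc
      have hc2 : j = j₂ := hc
      rw [hc2] at hj'
      exact absurd (hk2 ▸ hj'.1) (lt_irrefl _)
    have step1 : ∀ t ∈ (Pk B k).sigma (fun q => Je B q.1 k),
        Qx (x ∘ (Equiv.swap (t.1.1 t.2) k)) t.1.1 B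
          = Qx x (t.1.1 ∘ (Equiv.swap t.2 t.1.2)) B := by
      rintro ⟨⟨A, j₂⟩, j⟩ ht
      obtain ⟨hq, hj⟩ := Finset.mem_sigma.1 ht
      obtain ⟨hA, hk2o⟩ := mem_Pk.1 hq
      have hk2 : A j₂ = k := hk2o
      obtain ⟨hAinj, hAB, hAlt⟩ := mem_Adm.1 hA
      exact termT6' x hk2 (hne' _ ht) hAinj hAB hBinj hkB
    rw [Finset.sum_congr rfl step1]
    refine Finset.sum_nbij'
      (i := fun t => ⟨(t.1.1 ∘ (Equiv.swap t.2 t.1.2), t.2), t.1.2⟩)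
      (j := fun t => ⟨(t.1.1 ∘ (Equiv.swap t.2 t.1.2), t.2), t.1.2⟩) ?_ ?_ ?_ ?_ ?_
    · -- maps into the set
      rintro ⟨⟨A, j₂⟩, j⟩ ht
      obtain ⟨hq, hj⟩ := Finset.mem_sigma.1 ht
      obtain ⟨hA, hk2o⟩ := mem_Pk.1 hq
      have hk2 : A j₂ = k := hk2o
      obtain ⟨hAinj, hAB, hAlt⟩ := mem_Adm.1 hA
      have hj' : A j < k ∧ k < B j := by simpa [Je] using hj
      have hne2 : j ≠ j₂ := hne' _ ht
      refine Finset.mem_sigma.2 ⟨mem_Pk.2 ⟨mem_Adm.2 ⟨hAinj.comp (Equiv.injective _),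
        fun a b => hAB _ b, ?_⟩, ?_⟩, ?_⟩
      · intro a
        show A ((Equiv.swap j j₂) a) < B a
        by_cases h : a = j
        · rw [h, Equiv.swap_apply_left, hk2]; exact hj'.2
        · by_cases h' : a = j₂
          · rw [h', Equiv.swap_apply_right]; exact hj'.1.trans (hk2 ▸ hAlt j₂)
          · rw [Equiv.swap_apply_of_ne_of_ne h h']; exact hAlt a
      · show A ((Equiv.swap j j₂) j) = k
        rw [Equiv.swap_apply_left, hk2]
      · show j₂ ∈ Je B (A ∘ (Equiv.swap j j₂)) k
        simp only [Je, Finset.mem_filter, Finset.mem_univ, true_and, Function.comp_apply,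
          Equiv.swap_apply_right]
        exact ⟨hj'.1, hk2 ▸ hAlt j₂⟩
    · -- reverse maps into the set (same argument)
      rintro ⟨⟨A, j₂⟩, j⟩ ht
      obtain ⟨hq, hj⟩ := Finset.mem_sigma.1 ht
      obtain ⟨hA, hk2o⟩ := mem_Pk.1 hq
      have hk2 : A j₂ = k := hk2o
      obtain ⟨hAinj, hAB, hAlt⟩ := mem_Adm.1 hA
      have hj' : A j < k ∧ k < B j := by simpa [Je] using hj
      have hne2 : j ≠ j₂ := hne' _ ht
      refine Finset.mem_sigma.2 ⟨mem_Pk.2 ⟨mem_Adm.2 ⟨hAinj.comp (Equiv.injective _),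
        fun a b => hAB _ b, ?_⟩, ?_⟩, ?_⟩
      · intro a
        show A ((Equiv.swap j j₂) a) < B a
        by_cases h : a = j
        · rw [h, Equiv.swap_apply_left, hk2]; exact hj'.2
        · by_cases h' : a = j₂
          · rw [h', Equiv.swap_apply_right]; exact hj'.1.trans (hk2 ▸ hAlt j₂)
          · rw [Equiv.swap_apply_of_ne_of_ne h h']; exact hAlt a
      · show A ((Equiv.swap j j₂) j) = k
        rw [Equiv.swap_apply_left, hk2]
      · show j₂ ∈ Je B (A ∘ (Equiv.swap j j₂)) k
        simp only [Je, Finset.mem_filter, Finset.mem_univ, true_and, Function.comp_apply,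
          Equiv.swap_apply_right]
        exact ⟨hj'.1, hk2 ▸ hAlt j₂⟩
    · -- left inverse
      rintro ⟨⟨A, j₂⟩, j⟩ ht
      refine sig_eq (Prod.ext ?_ rfl) rfl
      show (A ∘ (Equiv.swap j j₂)) ∘ (Equiv.swap j₂ j) = A
      funext a
      rw [Function.comp_apply, Function.comp_apply, Equiv.swap_comm, Equiv.swap_apply_self]
    · -- right inverse
      rintro ⟨⟨A, j₂⟩, j⟩ ht
      refine sig_eq (Prod.ext ?_ rfl) rfl
      show (A ∘ (Equiv.swap j j₂)) ∘ (Equiv.swap j₂ j) = A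
      funext a
      rw [Function.comp_apply, Function.comp_apply, Equiv.swap_comm, Equiv.swap_apply_self]
    · rintro ⟨⟨A, j₂⟩, j⟩ ht
      rfl
  -- assemble
  rw [← TWsplit, ← TEsplit, TW0, TWk, TE0, TEk]
  have E : ∀ s : Finset (Fin d → Fin n), s ⊆ Adm B →
      ∑ A ∈ s, ((WW B A k).card : ℝ) * Qx x A B
        + ∑ A ∈ s, ((Je B A k).card : ℝ) * Qx x A B
      = ∑ A ∈ s, ((((Finset.Iio k).card : ℝ) - 2 * (Jlt B k).card) * Qx x A B) := by
    intro s hs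
    rw [← Finset.sum_add_distrib]
    refine Finset.sum_congr rfl fun A hA => ?_
    have hc := countI hBinj hkB (hs hA)
    have h2 : ((WW B A k).card : ℝ) + (Je B A k).card
        = ((Finset.Iio k).card : ℝ) - 2 * (Jlt B k).card := by linarith
    calc ((WW B A k).card : ℝ) * Qx x A B + ((Je B A k).card : ℝ) * Qx x A B
        = (((WW B A k).card : ℝ) + (Je B A k).card) * Qx x A B := by ring
      _ = _ := by rw [h2]
  have merge1 := E ((Adm B).filter (fun A => ¬∃ j, A j = k)) (Finset.filter_subset _ _)
  have merge2 := E ((Adm B).filter (fun A => ∃ j, A j = k)) (Finset.filter_subset _ _)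
  have mergeAll := Finset.sum_filter_add_sum_filter_not (Adm B) (fun A => ∃ j, A j = k)
    (fun A => (((Finset.Iio k).card : ℝ) - 2 * (Jlt B k).card) * Qx x A B)
  have hF : ∑ A ∈ Adm B, ((((Finset.Iio k).card : ℝ) - 2 * (Jlt B k).card) * Qx x A B)
      = ((((Finset.Iio k).card : ℝ) - 2 * (Jlt B k).card)) * ∑ A ∈ Adm B, Qx x A B := by
    rw [Finset.mul_sum]
  linear_combination merge1 + merge2 + mergeAll + hF

open Classical in
/-- the eigenvalue of the Jucys-Murphy operator at `k` on `χ_B` -/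
noncomputable def lam (B : Fin d → Fin n) (k : Fin n) : ℝ :=
  if ∃ j, B j = k then ((Jlt B k).card : ℝ) - 1
  else ((Finset.Iio k).card : ℝ) - (Jlt B k).card

lemma eval_chiB (x : Fin n → ℝ) (B : Fin d → Fin n) :
    eval x (chiB B) = ∑ A ∈ Adm B, Qx x A B := by
  rw [chiB, Adm, map_sum]
  refine Finset.sum_congr rfl fun A _ => ?_
  rw [chiAB, Qx, map_prod]
  simp

/-- the full eigenvector identity -/
lemma eigen {B : Fin d → Fin n} (hBinj : Function.Injective B) (k : Fin n) (x : Fin n → ℝ) :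
    ∑ i ∈ Finset.Iio k, eval (x ∘ (Equiv.swap i k)) (chiB B) = lam B k * eval x (chiB B) := by
  classical
  simp only [eval_chiB]
  rw [lam]
  split_ifs with h
  · obtain ⟨jk, hjk⟩ := h
    exact eigenII hBinj hjk x
  · push_neg at h
    exact eigenI hBinj h x

/-- Hall-type bound for a top set containing k -/
lemma hall_bound {B : Fin d → Fin n} (hTop : IsTopSet B) {k : Fin n} {jk : Fin d}
    (hjk : B jk = k) :
    2 * (Jlt B k).card + 1 ≤ (Finset.Iio k).card := by
  classical
  obtain ⟨hmono, A, hAinj, hAB, hAlt⟩ := hTop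
  have hBinj := hmono.injective
  have hjknot : jk ∉ Jlt B k := by
    simp only [Jlt, Finset.mem_filter, Finset.mem_univ, true_and, hjk]
    exact lt_irrefl k
  have hsub : (Jlt B k).image B ∪ (insert jk (Jlt B k)).image A ⊆ Finset.Iio k := by
    intro i hi
    rcases Finset.mem_union.1 hi with hi | hi
    · obtain ⟨j, hj, rfl⟩ := Finset.mem_image.1 hi
      have hjlt : B j < k := by simpa [Jlt] using hj
      exact Finset.mem_Iio.2 hjlt
    · obtain ⟨j, hj, rfl⟩ := Finset.mem_image.1 hi
      rcases Finset.mem_insert.1 hj with rfl | hj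
      · exact Finset.mem_Iio.2 (hjk ▸ hAlt j)
      · have hjlt : B j < k := by simpa [Jlt] using hj
        exact Finset.mem_Iio.2 ((hAlt j).trans hjlt)
  have hdisj : Disjoint ((Jlt B k).image B) ((insert jk (Jlt B k)).image A) := by
    rw [Finset.disjoint_left]
    rintro i hi1 hi2
    obtain ⟨j, _, rfl⟩ := Finset.mem_image.1 hi1
    obtain ⟨j', _, hj'⟩ := Finset.mem_image.1 hi2
    exact hAB j' j hj'
  have hcard := Finset.card_le_card hsub
  rw [Finset.card_union_of_disjoint hdisj, Finset.card_image_of_injective _ hBinj,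
    Finset.card_image_of_injective _ hAinj, Finset.card_insert_of_notMem hjknot] at hcard
  omega

lemma Jlt_card_eq {B : Fin d → Fin n} (hBinj : Function.Injective B) (k : Fin n) :
    (Jlt B k).card = ((Finset.univ.image B) ∩ Finset.Iio k).card := by
  classical
  have : (Finset.univ.image B) ∩ Finset.Iio k = (Jlt B k).image B := by
    ext i
    constructor
    · intro hi
      obtain ⟨hi1, hi2⟩ := Finset.mem_inter.1 hi
      obtain ⟨j, _, rfl⟩ := Finset.mem_image.1 hi1
      refine Finset.mem_image.2 ⟨j, ?_, rfl⟩
      show j ∈ Finset.univ.filter (fun j => B j < k)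
      exact Finset.mem_filter.2 ⟨Finset.mem_univ _, Finset.mem_Iio.1 hi2⟩
    · intro hi
      obtain ⟨j, hj, rfl⟩ := Finset.mem_image.1 hi
      have hj' : j ∈ Finset.univ.filter (fun j => B j < k) := hj
      exact Finset.mem_inter.2 ⟨Finset.mem_image.2 ⟨j, Finset.mem_univ _, rfl⟩,
        Finset.mem_Iio.2 (Finset.mem_filter.1 hj').2⟩
  rw [this, Finset.card_image_of_injective _ hBinj]

end Helpers

section MeasurePart
variable {n : ℕ}

lemma cont_eval (P : MvPolynomial (Fin n) ℝ) : Continuous fun x : Fin n → ℝ => eval x P := by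
  have : (fun x : Fin n → ℝ => eval x P)
      = fun x => ∑ m ∈ P.support, coeff m P * ∏ i, x i ^ m i :=
    _root_.funext fun x => eval_eq' _ _
  rw [this]
  exact continuous_finset_sum _ fun m _ =>
    continuous_const.mul (continuous_finset_prod _ fun i _ => (continuous_apply i).pow _)

lemma int_comp_perm (μ : Measure (Fin n → ℝ)) (hinv : PermInvariant μ)
    (P : MvPolynomial (Fin n) ℝ) (π : Equiv.Perm (Fin n)) :
    ∫ x, eval (x ∘ π) P ∂μ = ∫ x, eval x P ∂μ := by
  have hT : Measurable fun x : Fin n → ℝ => x ∘ π :=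
    measurable_pi_lambda _ fun i => measurable_pi_apply _
  conv_rhs => rw [← hinv π]
  rw [MeasureTheory.integral_map hT.aemeasurable (cont_eval P).aestronglyMeasurable]

lemma integrable_eval_mul (μ : Measure (Fin n → ℝ))
    (hint : ∀ P : MvPolynomial (Fin n) ℝ, Integrable (fun x => eval x P) μ)
    (P Q : MvPolynomial (Fin n) ℝ) (π : Equiv.Perm (Fin n)) :
    Integrable (fun x => eval (x ∘ π) P * eval x Q) μ := by
  have h := hint (rename π P * Q)
  have : (fun x => eval x (rename π P * Q)) = fun x => eval (x ∘ π) P * eval x Q := by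
    funext x
    rw [map_mul, eval_rename]
  rwa [this] at h

/-- self-adjointness of coordinate-swapping -/
lemma selfadj (μ : Measure (Fin n → ℝ)) (hinv : PermInvariant μ)
    (P Q : MvPolynomial (Fin n) ℝ) (π : Equiv.Perm (Fin n)) (hπ : ∀ y, π (π y) = y) :
    ∫ x, eval (x ∘ π) P * eval x Q ∂μ = ∫ x, eval x P * eval (x ∘ π) Q ∂μ := by
  have h1 : ∫ x, eval (x ∘ π) P * eval x Q ∂μ = ∫ x, eval x (rename π P * Q) ∂μ := by
    refine integral_congr_ae (Filter.Eventually.of_forall fun x => ?_)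
    dsimp only
    rw [map_mul, eval_rename]
  have h2 := int_comp_perm μ hinv (rename π P * Q) π
  rw [h1, ← h2]
  refine integral_congr_ae (Filter.Eventually.of_forall fun x => ?_)
  dsimp only
  rw [map_mul, eval_rename]
  have : (x ∘ π) ∘ π = x := funext fun y => congrArg x (hπ y)
  rw [this]

end MeasurePart

section MainAux
open Finset

/-- the main orthogonality argument, for `k` in the range of `B₁` but not of `B₂` -/
lemma orth_aux {n d₁ d₂ : ℕ} (μ : Measure (Fin n → ℝ))
    (hinv : PermInvariant μ)
    (hint : ∀ P : MvPolynomial (Fin n) ℝ, Integrable (fun x => eval x P) μ)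
    (B₁ : Fin d₁ → Fin n) (B₂ : Fin d₂ → Fin n)
    (hB₁ : IsTopSet B₁) (hB₂ : IsTopSet B₂) (k : Fin n) {jk : Fin d₁}
    (hk₁ : B₁ jk = k) (hk₂ : ∀ j, B₂ j ≠ k)
    (hlow : (Jlt B₁ k).card = (Jlt B₂ k).card) :
    ∫ x, eval x (chiB B₁) * eval x (chiB B₂) ∂μ = 0 := by
  classical
  have hB₁inj := hB₁.1.injective
  have hB₂inj := hB₂.1.injective
  set I := ∫ x, eval x (chiB B₁) * eval x (chiB B₂) ∂μ with hI
  -- step 1 : lam B₁ k * I = sum of twisted integrals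
  have step1 : lam B₁ k * I
      = ∑ i ∈ Finset.Iio k, ∫ x, eval (x ∘ (Equiv.swap i k)) (chiB B₁) * eval x (chiB B₂) ∂μ := by
    rw [← MeasureTheory.integral_finset_sum _
      (fun i _ => integrable_eval_mul μ hint (chiB B₁) (chiB B₂) (Equiv.swap i k))]
    rw [hI, ← MeasureTheory.integral_const_mul]
    refine integral_congr_ae (Filter.Eventually.of_forall fun x => ?_)
    dsimp only
    rw [← Finset.sum_mul, eigen hB₁inj k x]
    ring
  have step3 : lam B₂ k * I
      = ∑ i ∈ Finset.Iio k, ∫ x, eval x (chiB B₁) * eval (x ∘ (Equiv.swap i k)) (chiB B₂) ∂μ := by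
    have hint' : ∀ i : Fin n, Integrable
        (fun x => eval x (chiB B₁) * eval (x ∘ (Equiv.swap i k)) (chiB B₂)) μ := by
      intro i
      have h := integrable_eval_mul μ hint (chiB B₂) (chiB B₁) (Equiv.swap i k)
      have : (fun x => eval (x ∘ (Equiv.swap i k)) (chiB B₂) * eval x (chiB B₁))
          = fun x => eval x (chiB B₁) * eval (x ∘ (Equiv.swap i k)) (chiB B₂) := by
        funext x; ring
      rwa [this] at h
    rw [← MeasureTheory.integral_finset_sum _ (fun i _ => hint' i)]
    rw [hI, ← MeasureTheory.integral_const_mul]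
    refine integral_congr_ae (Filter.Eventually.of_forall fun x => ?_)
    dsimp only
    rw [← Finset.mul_sum, eigen hB₂inj k x]
    ring
  have step2 : ∀ i ∈ Finset.Iio k,
      ∫ x, eval (x ∘ (Equiv.swap i k)) (chiB B₁) * eval x (chiB B₂) ∂μ
        = ∫ x, eval x (chiB B₁) * eval (x ∘ (Equiv.swap i k)) (chiB B₂) ∂μ := by
    intro i _
    exact selfadj μ hinv (chiB B₁) (chiB B₂) (Equiv.swap i k)
      (fun y => Equiv.swap_apply_self _ _ _)
  have hEqI : lam B₁ k * I = lam B₂ k * I := by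
    rw [step1, step3]
    exact Finset.sum_congr rfl step2
  -- eigenvalue separation
  have hlam : lam B₁ k ≠ lam B₂ k := by
    have h1 : lam B₁ k = ((Jlt B₁ k).card : ℝ) - 1 := by
      rw [lam, if_pos ⟨jk, hk₁⟩]
    have h2 : lam B₂ k = ((Finset.Iio k).card : ℝ) - (Jlt B₂ k).card := by
      rw [lam, if_neg (by push_neg; exact fun j => hk₂ j)]
    have hh := hall_bound hB₁ hk₁
    rw [h1, h2, ← hlow]
    intro hc
    have : (2 * (Jlt B₁ k).card + 1 : ℝ) ≤ ((Finset.Iio k).card : ℝ) := by exact_mod_cast hh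
    push_cast at this
    linarith [hc, this]
  by_contra hI0
  exact hlam (mul_right_cancel₀ hI0 hEqI)

end MainAux

theorem chiB_orthogonal {n d₁ d₂ : ℕ} (μ : Measure (Fin n → ℝ))
    [IsProbabilityMeasure μ] (hinv : PermInvariant μ)
    (hint : ∀ P : MvPolynomial (Fin n) ℝ, Integrable (fun x => eval x P) μ)
    (B₁ : Fin d₁ → Fin n) (B₂ : Fin d₂ → Fin n)
    (hB₁ : IsTopSet B₁) (hB₂ : IsTopSet B₂)
    (hne : ¬ (d₁ = d₂ ∧ HEq B₁ B₂)) :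
    ∫ x, eval x (chiB B₁) * eval x (chiB B₂) ∂μ = 0 := by
  classical
  have hmono₁ := hB₁.1
  have hmono₂ := hB₂.1
  set S₁ := Finset.univ.image B₁ with hS₁
  set S₂ := Finset.univ.image B₂ with hS₂
  have hc₁ : S₁.card = d₁ := by
    rw [hS₁, Finset.card_image_of_injective _ hmono₁.injective, Finset.card_univ,
      Fintype.card_fin]
  have hc₂ : S₂.card = d₂ := by
    rw [hS₂, Finset.card_image_of_injective _ hmono₂.injective, Finset.card_univ,
      Fintype.card_fin]
  have hSne : S₁ ≠ S₂ := by
    intro hEq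
    have hd : d₁ = d₂ := by rw [← hc₁, ← hc₂, hEq]
    subst hd
    refine hne ⟨rfl, heq_of_eq ?_⟩
    have e₁ : B₁ = S₁.orderEmbOfFin hc₁ :=
      Finset.orderEmbOfFin_unique hc₁
        (fun i => Finset.mem_image_of_mem _ (Finset.mem_univ i)) hmono₁
    have e₂ : B₂ = S₁.orderEmbOfFin hc₁ :=
      Finset.orderEmbOfFin_unique hc₁
        (fun i => hEq ▸ Finset.mem_image_of_mem _ (Finset.mem_univ i)) hmono₂
    rw [e₁, e₂]
  have hsd : (symmDiff S₁ S₂).Nonempty := by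
    rw [Finset.nonempty_iff_ne_empty]
    intro h
    exact hSne (symmDiff_eq_bot.1 h)
  set k := (symmDiff S₁ S₂).min' hsd with hk
  have hkmem : k ∈ symmDiff S₁ S₂ := Finset.min'_mem _ _
  have hbelow : S₁ ∩ Finset.Iio k = S₂ ∩ Finset.Iio k := by
    ext i
    simp only [Finset.mem_inter, Finset.mem_Iio]
    constructor
    · rintro ⟨hi, hik⟩
      refine ⟨?_, hik⟩
      by_contra hni
      have : i ∈ symmDiff S₁ S₂ := Finset.mem_symmDiff.2 (Or.inl ⟨hi, hni⟩)
      exact absurd (Finset.min'_le _ _ this) (not_le.2 hik)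
    · rintro ⟨hi, hik⟩
      refine ⟨?_, hik⟩
      by_contra hni
      have : i ∈ symmDiff S₁ S₂ := Finset.mem_symmDiff.2 (Or.inr ⟨hi, hni⟩)
      exact absurd (Finset.min'_le _ _ this) (not_le.2 hik)
  have hJlt : (Jlt B₁ k).card = (Jlt B₂ k).card := by
    rw [Jlt_card_eq hmono₁.injective, Jlt_card_eq hmono₂.injective, ← hS₁, ← hS₂, hbelow]
  rcases Finset.mem_symmDiff.1 hkmem with ⟨hk₁, hk₂⟩ | ⟨hk₂, hk₁⟩
  · obtain ⟨jk, hjk⟩ := Finset.mem_image.1 hk₁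
    have hnk₂ : ∀ j, B₂ j ≠ k := by
      intro j hc
      exact hk₂ (hc ▸ Finset.mem_image_of_mem _ (Finset.mem_univ j))
    exact orth_aux μ hinv hint B₁ B₂ hB₁ hB₂ k hjk.2 hnk₂ hJlt
  · obtain ⟨jk, hjk⟩ := Finset.mem_image.1 hk₂
    have hnk₁ : ∀ j, B₁ j ≠ k := by
      intro j hc
      exact hk₁ (hc ▸ Finset.mem_image_of_mem _ (Finset.mem_univ j))
    have := orth_aux μ hinv hint B₂ B₁ hB₂ hB₁ k hjk.2 hnk₁ hJlt.symm
    rw [← this]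
    refine integral_congr_ae (Filter.Eventually.of_forall fun x => ?_)
    ring
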